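/- arXiv:1606.02815 — 2 statements merged into one kernel-verified Lean document; each statement's English description precedes it below -/
import Mathlib

section
/- Let G be a graph in W₂ and S an independent set of G with |S| < α(G). Then G_S = G \ N_G[S] is in W₂; in particular, G_S has no isolated vertices. -/
open Set

variable {V : Type*}

/-- `S` is an independent set of `G` contained in the vertex subset `W`
(i.e. an independent set of the induced subgraph `G[W]`). -/
def IsIndepOn (G : SimpleGraph V) (W S : Set V) : Prop :=
  S ⊆ W ∧ ∀ ⦃x⦄, x ∈ S → ∀ ⦃y⦄, y ∈ S → ¬ G.Adj x y

/-- `S` is a maximal independent set of the induced subgraph `G[W]`. -/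
def MaxIndepOn (G : SimpleGraph V) (W : Set V) (S : Finset V) : Prop :=
  IsIndepOn G W ↑S ∧ ∀ v ∈ W, v ∉ S → ¬ IsIndepOn G W (insert v ↑S)

/-- The independence number of the induced subgraph `G[W]`. -/
noncomputable def indepNumOn (G : SimpleGraph V) (W : Set V) : ℕ :=
  sSup {n | ∃ S : Finset V, IsIndepOn G W ↑S ∧ S.card = n}

/-- The induced subgraph `G[W]` is well-covered: every maximal independent set
has cardinality equal to the independence number. -/
def WellCoveredOn (G : SimpleGraph V) (W : Set V) : Prop :=
  ∀ S : Finset V, MaxIndepOn G W S → S.card = indepNumOn G W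

/-- The independence number `α(G)`. -/
noncomputable def indepNum (G : SimpleGraph V) : ℕ := indepNumOn G Set.univ

/-- `G` is well-covered. -/
def WellCovered (G : SimpleGraph V) : Prop := WellCoveredOn G Set.univ

/-- The induced subgraph `G[W]` has no isolated vertices. -/
def NoIsolatedOn (G : SimpleGraph V) (W : Set V) : Prop :=
  ∀ v ∈ W, ∃ u ∈ W, G.Adj v u

/-- The induced subgraph `G[W]` is in the class `W₂`: it has no isolated
vertices, is well-covered, and removing any vertex leaves a well-covered graph
with the same independence number. -/
def W2On (G : SimpleGraph V) (W : Set V) : Prop :=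
  NoIsolatedOn G W ∧ WellCoveredOn G W ∧
    ∀ v ∈ W, WellCoveredOn G (W \ {v}) ∧ indepNumOn G (W \ {v}) = indepNumOn G W

/-- `G` is in the class `W₂`. -/
def W2 (G : SimpleGraph V) : Prop := W2On G Set.univ

/-- The closed neighborhood `N_G[S]` of a set of vertices `S`. -/
def nbhd (G : SimpleGraph V) (S : Set V) : Set V :=
  {v | v ∈ S ∨ ∃ u ∈ S, G.Adj u v}

/-- The vertex set of `G_S = G \ N_G[S]`. -/
def GDel (G : SimpleGraph V) (S : Set V) : Set V := Set.univ \ nbhd G S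

/-- The induced subgraph `G[W]` is triangle-free. -/
def TriangleFreeOn (G : SimpleGraph V) (W : Set V) : Prop :=
  ∀ x ∈ W, ∀ y ∈ W, ∀ z ∈ W, ¬ (G.Adj x y ∧ G.Adj y z ∧ G.Adj x z)

/-- `G` is locally triangle-free: `G_v` is triangle-free for every vertex `v`. -/
def LocallyTriangleFree (G : SimpleGraph V) : Prop :=
  ∀ v : V, TriangleFreeOn G (GDel G {v})

/-- `G` is a join of two proper (nonempty, disjoint) subgraphs. -/
def IsJoin (G : SimpleGraph V) : Prop :=
  ∃ V₁ V₂ : Set V, V₁.Nonempty ∧ V₂.Nonempty ∧ Disjoint V₁ V₂ ∧ V₁ ∪ V₂ = Set.univ ∧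
    ∀ x ∈ V₁, ∀ y ∈ V₂, G.Adj x y

/-! If `T` is independent in a well-covered graph `G[W]`, every maximal independent set of
`G[W \ N[T]]` extends by `T` to a maximal independent set of `G[W]`, so `G[W \ N[T]]` is
well-covered with independence number `α(G[W]) - |T|`. Applied to `G` and to each `G - v` with
`v ∉ N[S]` (where `(G - v)_S = G_S - v`), this shows that deleting a vertex of `G_S` keeps it
well-covered with the same independence number. That equality rules out isolated vertices: an
isolated vertex `v` could be added to a maximum independent set of `G_S - v`. -/

section IndependenceNumber

variable [Fintype V] {G : SimpleGraph V} {W : Set V}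

lemma bddAbove_indepCards (G : SimpleGraph V) (W : Set V) :
    BddAbove {n | ∃ S : Finset V, IsIndepOn G W ↑S ∧ S.card = n} :=
  ⟨Fintype.card V, by rintro n ⟨S, -, rfl⟩; exact S.card_le_univ⟩

lemma card_le_indepNumOn {A : Finset V} (hA : IsIndepOn G W ↑A) : A.card ≤ indepNumOn G W :=
  le_csSup (bddAbove_indepCards G W) ⟨A, hA, rfl⟩

lemma exists_card_eq_indepNumOn (G : SimpleGraph V) (W : Set V) :
    ∃ A : Finset V, IsIndepOn G W ↑A ∧ A.card = indepNumOn G W :=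
  Nat.sSup_mem (s := {n | ∃ S : Finset V, IsIndepOn G W ↑S ∧ S.card = n})
    ⟨0, ∅, ⟨by simp, by simp⟩, rfl⟩ (bddAbove_indepCards G W)

lemma maxIndepOn_of_card_eq_indepNumOn {A : Finset V} (hA : IsIndepOn G W ↑A)
    (hcard : A.card = indepNumOn G W) : MaxIndepOn G W A := by
  classical
  refine ⟨hA, fun v _ hvA hins => ?_⟩
  have := card_le_indepNumOn (A := insert v A) (by rwa [Finset.coe_insert])
  rw [Finset.card_insert_of_notMem hvA] at this
  omega

theorem noIsolatedOn_of_indepNumOn_diff_singleton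
    (h : ∀ v ∈ W, indepNumOn G (W \ {v}) = indepNumOn G W) : NoIsolatedOn G W := by
  classical
  intro v hv
  by_contra! hiso
  obtain ⟨A, hA, hcard⟩ := exists_card_eq_indepNumOn G (W \ {v})
  have hvA : v ∉ A := fun h => (hA.1 h).2 rfl
  have hins : IsIndepOn G W ↑(insert v A) := by
    rw [Finset.coe_insert]
    refine ⟨insert_subset hv (hA.1.trans sdiff_subset), ?_⟩
    rintro x (rfl | hx) y (rfl | hy)
    · exact G.irrefl
    · exact hiso y (hA.1 hy).1
    · exact fun hxy => hiso x (hA.1 hx).1 hxy.symm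
    · exact hA.2 hx hy
  have := card_le_indepNumOn hins
  rw [Finset.card_insert_of_notMem hvA, hcard, h v hv] at this
  omega

end IndependenceNumber

section DeleteNeighborhood

variable {G : SimpleGraph V} {W : Set V} {T A : Finset V}

lemma disjoint_of_subset_diff_nbhd (hA : (↑A : Set V) ⊆ W \ nbhd G ↑T) : Disjoint A T :=
  Finset.disjoint_left.2 fun _ ha hat => (hA ha).2 (Or.inl hat)

lemma IsIndepOn.union_of_diff_nbhd [DecidableEq V] (hT : IsIndepOn G W ↑T)
    (hA : IsIndepOn G (W \ nbhd G ↑T) ↑A) : IsIndepOn G W ↑(A ∪ T) := by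
  have cross : ∀ a ∈ A, ∀ t ∈ T, ¬ G.Adj a t := fun a ha t ht hadj =>
    (hA.1 ha).2 (Or.inr ⟨t, ht, hadj.symm⟩)
  rw [Finset.coe_union]
  refine ⟨union_subset (hA.1.trans sdiff_subset) hT.1, ?_⟩
  rintro x (hx | hx) y (hy | hy)
  · exact hA.2 hx hy
  · exact cross x hx y hy
  · exact fun h => cross y hy x hx h.symm
  · exact hT.2 hx hy

lemma MaxIndepOn.union_of_diff_nbhd [DecidableEq V] (hT : IsIndepOn G W ↑T)
    (hM : MaxIndepOn G (W \ nbhd G ↑T) A) : MaxIndepOn G W (A ∪ T) := by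
  refine ⟨hT.union_of_diff_nbhd hM.1, fun u hu huAT hins => ?_⟩
  have hsub : insert u (↑A : Set V) ⊆ insert u ↑(A ∪ T) := by
    rw [Finset.coe_union]
    exact insert_subset_insert subset_union_left
  have hunb : u ∉ nbhd G ↑T := by
    rintro (hut | ⟨t, ht, hadj⟩)
    · exact huAT (Finset.mem_union_right A hut)
    · exact hins.2 (mem_insert u _)
        (mem_insert_of_mem u (Finset.mem_coe.2 (Finset.mem_union_right A ht))) hadj.symm
  exact hM.2 u ⟨hu, hunb⟩ (fun h => huAT (Finset.mem_union_left T h))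
    ⟨insert_subset ⟨hu, hunb⟩ hM.1.1, fun x hx y hy => hins.2 (hsub hx) (hsub hy)⟩

lemma WellCoveredOn.card_add_card_of_maxIndepOn_diff_nbhd (hW : WellCoveredOn G W)
    (hT : IsIndepOn G W ↑T) (hA : MaxIndepOn G (W \ nbhd G ↑T) A) :
    A.card + T.card = indepNumOn G W := by
  classical
  rw [← Finset.card_union_of_disjoint (disjoint_of_subset_diff_nbhd hA.1.1)]
  exact hW _ (hA.union_of_diff_nbhd hT)

end DeleteNeighborhood

section WellCovered

variable [Fintype V] {G : SimpleGraph V} {W : Set V} {T : Finset V}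

lemma WellCoveredOn.indepNumOn_diff_nbhd_add_card (hW : WellCoveredOn G W)
    (hT : IsIndepOn G W ↑T) : indepNumOn G (W \ nbhd G ↑T) + T.card = indepNumOn G W := by
  obtain ⟨A, hA, hcard⟩ := exists_card_eq_indepNumOn G (W \ nbhd G ↑T)
  rw [← hcard]
  exact hW.card_add_card_of_maxIndepOn_diff_nbhd hT (maxIndepOn_of_card_eq_indepNumOn hA hcard)

lemma WellCoveredOn.diff_nbhd (hW : WellCoveredOn G W) (hT : IsIndepOn G W ↑T) :
    WellCoveredOn G (W \ nbhd G ↑T) := fun A hA => by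
  have hA_card := hW.card_add_card_of_maxIndepOn_diff_nbhd hT hA
  have hα := hW.indepNumOn_diff_nbhd_add_card hT
  omega

theorem w2On_diff_nbhd (hW : WellCoveredOn G W)
    (hdel : ∀ v ∈ W, WellCoveredOn G (W \ {v}) ∧ indepNumOn G (W \ {v}) = indepNumOn G W)
    (hT : IsIndepOn G W ↑T) : W2On G (W \ nbhd G ↑T) := by
  have hdel_nbhd : ∀ v ∈ W \ nbhd G ↑T, WellCoveredOn G ((W \ nbhd G ↑T) \ {v}) ∧
      indepNumOn G ((W \ nbhd G ↑T) \ {v}) = indepNumOn G (W \ nbhd G ↑T) := by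
    rintro v ⟨hvW, hvT⟩
    obtain ⟨hWv, hαv⟩ := hdel v hvW
    have hTv : IsIndepOn G (W \ {v}) ↑T :=
      ⟨fun t ht => ⟨hT.1 ht, by rintro rfl; exact hvT (Or.inl ht)⟩, hT.2⟩
    rw [sdiff_sdiff_comm]
    refine ⟨hWv.diff_nbhd hTv, ?_⟩
    have hα := hW.indepNumOn_diff_nbhd_add_card hT
    have hαv' := hWv.indepNumOn_diff_nbhd_add_card hTv
    omega
  exact ⟨noIsolatedOn_of_indepNumOn_diff_singleton fun v hv => (hdel_nbhd v hv).2,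
    hW.diff_nbhd hT, hdel_nbhd⟩

end WellCovered

theorem stmt_8_general [Fintype V] (G : SimpleGraph V) (h2 : W2 G)
    (S : Finset V) (hS : IsIndepOn G Set.univ ↑S) :
    W2On G (GDel G ↑S) ∧ NoIsolatedOn G (GDel G ↑S) := by
  have hGS : W2On G (GDel G ↑S) := w2On_diff_nbhd h2.2.1 h2.2.2 hS
  exact ⟨hGS, hGS.1⟩

/-- If `G` is in `W₂` and `S` is an independent set with `|S| < α(G)`, then
`G_S` is in `W₂`; in particular `G_S` has no isolated vertices. -/
theorem stmt_8 [Fintype V] (G : SimpleGraph V) (h2 : W2 G)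
    (S : Finset V) (hS : IsIndepOn G Set.univ ↑S) (hcard : S.card < indepNum G) :
    W2On G (GDel G ↑S) ∧ NoIsolatedOn G (GDel G ↑S) :=
  stmt_8_general G h2 S hS
end

section
/- Let G be a locally triangle-free graph in W₂ with α(G) ≥ 3, let (abc) be a triangle in G with G_{ab} ≠ ∅, and let A = N_G(a) \ N_G[b]. Suppose a vertex x and a vertex y in A are adjacent, and let v be a vertex of G_{ab}. Then v is adjacent to exactly one of x and y. -/
open Set

variable {V : Type*}

theorem mem_GDel_singleton {G : SimpleGraph V} {u v : V} :
    v ∈ GDel G {u} ↔ v ≠ u ∧ ¬ G.Adj u v := by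
  simp [GDel, nbhd]

theorem mem_GDel_singleton_comm {G : SimpleGraph V} {u v : V} :
    v ∈ GDel G {u} ↔ u ∈ GDel G {v} := by
  simp only [mem_GDel_singleton, ne_comm, G.adj_comm]

theorem GDel_anti {G : SimpleGraph V} {S T : Set V} (hST : S ⊆ T) : GDel G T ⊆ GDel G S :=
  fun _ hv => ⟨trivial, fun h => hv.2 <| h.imp (@hST _) fun ⟨u, hu, huv⟩ => ⟨u, hST hu, huv⟩⟩

namespace LocallyTriangleFree

variable {G : SimpleGraph V} {b x y v : V}

theorem not_adj_and_adj (hloc : LocallyTriangleFree G) (hxy : G.Adj x y)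
    (hx : x ∈ GDel G {b}) (hy : y ∈ GDel G {b}) (hv : v ∈ GDel G {b}) :
    ¬ (G.Adj v x ∧ G.Adj v y) :=
  fun ⟨hvx, hvy⟩ => hloc b x hx y hy v hv ⟨hxy, hvy.symm, hvx.symm⟩

/-- Otherwise the triangle `axy` would lie in `G_v`. -/
theorem adj_or_adj_of_triangle (hloc : LocallyTriangleFree G) {a : V} (hax : G.Adj a x)
    (hay : G.Adj a y) (hxy : G.Adj x y) (hv : v ∈ GDel G {a}) :
    G.Adj v x ∨ G.Adj v y := by
  have hva : ¬ G.Adj a v := (mem_GDel_singleton.1 hv).2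
  by_contra! ⟨hvx, hvy⟩
  have hxv : x ≠ v := by rintro rfl; exact hva hax
  have hyv : y ≠ v := by rintro rfl; exact hva hay
  exact hloc v a (mem_GDel_singleton_comm.1 hv) x (mem_GDel_singleton.2 ⟨hxv, hvx⟩)
    y (mem_GDel_singleton.2 ⟨hyv, hvy⟩) ⟨hax, hxy, hay⟩

end LocallyTriangleFree

theorem stmt_9_general (G : SimpleGraph V) (hloc : LocallyTriangleFree G) {a b : V}
    {x y : V} (hx : x ∈ G.neighborSet a \ nbhd G {b}) (hy : y ∈ G.neighborSet a \ nbhd G {b})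
    (hxy : G.Adj x y) {v : V} (hv : v ∈ GDel G {a, b}) :
    Xor' (G.Adj v x) (G.Adj v y) := by
  have hva : v ∈ GDel G {a} := GDel_anti (by simp) hv
  have hvb : v ∈ GDel G {b} := GDel_anti (by simp) hv
  exact (xor_iff_or_and_not_and _ _).2 ⟨hloc.adj_or_adj_of_triangle hx.1 hy.1 hxy hva,
    hloc.not_adj_and_adj hxy ⟨trivial, hx.2⟩ ⟨trivial, hy.2⟩ hvb⟩

/-- Claim 1 of Lemma on the structure of `G[A]`: if `xy` is an edge of `G[A]`
with `A = N_G(a) \ N_G[b]` and `v` is a vertex of `G_{ab} ≠ ∅`, then `v` is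
adjacent to exactly one of `x` and `y`. -/
theorem stmt_9 [Fintype V] (G : SimpleGraph V) (h2 : W2 G)
    (hloc : LocallyTriangleFree G) (hα : 3 ≤ indepNum G)
    {a b c : V} (hab : G.Adj a b) (hbc : G.Adj b c) (hac : G.Adj a c)
    (hne : (GDel G {a, b}).Nonempty)
    {x y : V} (hx : x ∈ G.neighborSet a \ nbhd G {b})
    (hy : y ∈ G.neighborSet a \ nbhd G {b}) (hxy : G.Adj x y)
    {v : V} (hv : v ∈ GDel G {a, b}) :
    Xor' (G.Adj v x) (G.Adj v y) :=
  stmt_9_general G hloc hx hy hxy hv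
end
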